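/- Let E and F be modules with Leibniz operators and T : E → F an A-module map. Define ∇_j(T) := ∇_{F,j} ∘ T − T ∘ ∇_{E,j} and Q(T) := T + (λ/2) ω^{ij} ∇_{F,i} ∘ ∇_j(T), extended λ-linearly to a map E₁ → F₁. Then: (i) Q(T) is a left A₁-module map, i.e. Q(T)(a • e) = a • Q(T)(e) for all a ∈ A₁, e ∈ E₁; (ii) if T intertwines the Leibniz operators, i.e. ∇_{F,j} ∘ T = T ∘ ∇_{E,j} for all j, then Q(T) = T and T is an A₁-bimodule map (it also satisfies T(e • a) = T(e) • a); (iii) for a further module with Leibniz operators G and an A-module map S : G → E, one has Q(T ∘ S) = Q(T) ∘ Q(S) + (λ/2) ω^{ij} ∇_i(T) ∘ ∇_j(S) as maps G₁ → F₁. -/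

import Mathlib

/-!
Since `T` is `A`-linear, each `∇_j(T)` is `A`-linear, so `∇_{F,i} ∘ ∇_j(T)` fails to be
`A`-linear exactly by `δ_i(a) ∇_j(T)`; contracted with `ω^{ij}/2`, this is what the deformed
action needs to commute with `Q(T)`. The composition law comes from the Leibniz rule
`∇_j(T ∘ S) = ∇_j(T) ∘ S + T ∘ ∇_j(S)` together with `∇_{F,i} ∘ T = ∇_i(T) + T ∘ ∇_{E,i}`.
An intertwiner has `∇_j(T) = 0`, hence `Q(T) = T`.
-/

namespace Stmt3

/-- The semiclassical data: derivations `δ_i` and an antisymmetric `ω^{ij}` with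
entries in a commutative algebra `A` over a field `K` of characteristic zero. -/
structure DefData (K A : Type) [Field K] [CharZero K] [CommRing A] [Algebra K A]
    (n : ℕ) where
  δ : Fin n → A → A
  ω : Fin n → Fin n → A
  δ_add : ∀ i a b, δ i (a + b) = δ i a + δ i b
  δ_leibniz : ∀ i a b, δ i (a * b) = a * δ i b + b * δ i a
  ω_anti : ∀ i j, ω i j = - ω j i

variable {K A : Type} [Field K] [CharZero K] [CommRing A] [Algebra K A] {n : ℕ}

/-- The scalar `1/2` in `A`. -/
noncomputable def half (K A : Type) [Field K] [CharZero K] [CommRing A] [Algebra K A] : A :=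
  algebraMap K A (2⁻¹ : K)

/-- The deformed product on `A₁ = A ⊕ λA` (a pair `(a₀, a₁)` stands for `a₀ + λ a₁`,
with `λ² = 0`):  `a • b = ab + (λ/2) ω^{ij} δ_i(a) δ_j(b)`, extended `λ`-bilinearly. -/
noncomputable def mul1 (D : DefData K A n) (a b : A × A) : A × A :=
  (a.1 * b.1,
   a.1 * b.2 + a.2 * b.1 + half K A * ∑ i, ∑ j, D.ω i j * D.δ i a.1 * D.δ j b.1)

/-- A module with Leibniz operators: an `A`-module `E` with additive maps `∇_{E,j}`
satisfying `∇_{E,j}(a e) = a ∇_{E,j} e + δ_j(a) e`. -/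
structure LeibMod (D : DefData K A n) (E : Type) [AddCommGroup E] [Module A E] where
  nab : Fin n → E → E
  nab_add : ∀ j e f, nab j (e + f) = nab j e + nab j f
  nab_smul : ∀ j a e, nab j (a • e) = a • nab j e + D.δ j a • e

variable {D : DefData K A n} {E : Type} [AddCommGroup E] [Module A E]

/-- Deformed left action of `A₁` on `E₁ = E ⊕ λE`:
`a • e = a e + (λ/2) ω^{ij} δ_i(a) ∇_{E,j}(e)`, extended `λ`-bilinearly. -/
noncomputable def lact (L : LeibMod D E) (a : A × A) (e : E × E) : E × E :=
  (a.1 • e.1,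
   a.1 • e.2 + a.2 • e.1 + ∑ i, ∑ j, (half K A * D.ω i j * D.δ i a.1) • L.nab j e.1)

/-- Deformed right action of `A₁` on `E₁ = E ⊕ λE`:
`e • a = a e − (λ/2) ω^{ij} δ_i(a) ∇_{E,j}(e)`, extended `λ`-bilinearly. -/
noncomputable def ract (L : LeibMod D E) (e : E × E) (a : A × A) : E × E :=
  (a.1 • e.1,
   a.1 • e.2 + a.2 • e.1 - ∑ i, ∑ j, (half K A * D.ω i j * D.δ i a.1) • L.nab j e.1)

variable {F G : Type} [AddCommGroup F] [Module A F] [AddCommGroup G] [Module A G]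

/-- `∇_j(T) = ∇_{F,j} ∘ T − T ∘ ∇_{E,j}`. -/
noncomputable def nabOf (LE : LeibMod D E) (LF : LeibMod D F) (T : E →ₗ[A] F)
    (j : Fin n) (e : E) : F :=
  LF.nab j (T e) - T (LE.nab j e)

/-- The quantisation `Q(T) = T + (λ/2) ω^{ij} ∇_{F,i} ∘ ∇_j(T)` of an `A`-module map,
extended `λ`-linearly to `E₁ → F₁`. -/
noncomputable def Qmap (LE : LeibMod D E) (LF : LeibMod D F) (T : E →ₗ[A] F)
    (e : E × E) : F × F :=
  (T e.1,
   T e.2 + ∑ i, ∑ j, (half K A * D.ω i j) • LF.nab i (nabOf LE LF T j e.1))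

lemma LeibMod.nab_zero (L : LeibMod D E) (j : Fin n) : L.nab j 0 = 0 := by
  simpa using (L.nab_add j 0 0).symm

lemma nab_map_eq_nabOf_add (LE : LeibMod D E) (LF : LeibMod D F) (T : E →ₗ[A] F)
    (j : Fin n) (e : E) :
    LF.nab j (T e) = nabOf LE LF T j e + T (LE.nab j e) := by
  simp [nabOf]

lemma nabOf_eq_zero_of_intertwines {LE : LeibMod D E} {LF : LeibMod D F} {T : E →ₗ[A] F}
    (hT : ∀ j e, LF.nab j (T e) = T (LE.nab j e)) (j : Fin n) (e : E) :
    nabOf LE LF T j e = 0 := by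
  simp [nabOf, hT]

lemma nabOf_smul (LE : LeibMod D E) (LF : LeibMod D F) (T : E →ₗ[A] F)
    (j : Fin n) (a : A) (e : E) :
    nabOf LE LF T j (a • e) = a • nabOf LE LF T j e := by
  simp only [nabOf, map_smul, LE.nab_smul, LF.nab_smul, map_add, smul_sub]
  abel

lemma nabOf_comp (LE : LeibMod D E) (LF : LeibMod D F) (LG : LeibMod D G)
    (T : E →ₗ[A] F) (S : G →ₗ[A] E) (j : Fin n) (g : G) :
    nabOf LG LF (T ∘ₗ S) j g = nabOf LE LF T j (S g) + T (nabOf LG LE S j g) := by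
  simp only [nabOf, LinearMap.comp_apply, map_sub]
  abel

lemma Qmap_lact (LE : LeibMod D E) (LF : LeibMod D F) (T : E →ₗ[A] F) (a : A × A) (e : E × E) :
    Qmap LE LF T (lact LE a e) = lact LF a (Qmap LE LF T e) := by
  refine Prod.ext (map_smul T _ _) ?_
  simp only [Qmap, lact, map_add, map_smul, map_sum, nabOf_smul, LF.nab_smul, smul_add,
    Finset.smul_sum, Finset.sum_add_distrib, nab_map_eq_nabOf_add LE LF T, smul_smul]
  simp only [mul_comm, mul_left_comm]
  abel

lemma Qmap_eq_of_intertwines {LE : LeibMod D E} {LF : LeibMod D F} {T : E →ₗ[A] F}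
    (hT : ∀ j e, LF.nab j (T e) = T (LE.nab j e)) (e : E × E) :
    Qmap LE LF T e = (T e.1, T e.2) := by
  simp [Qmap, nabOf_eq_zero_of_intertwines hT, LF.nab_zero]

lemma map_ract_of_intertwines {LE : LeibMod D E} {LF : LeibMod D F} {T : E →ₗ[A] F}
    (hT : ∀ j e, LF.nab j (T e) = T (LE.nab j e)) (e : E × E) (a : A × A) :
    (T (ract LE e a).1, T (ract LE e a).2) = ract LF (T e.1, T e.2) a := by
  simp [ract, map_sum, hT]

lemma Qmap_comp (LE : LeibMod D E) (LF : LeibMod D F) (LG : LeibMod D G)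
    (T : E →ₗ[A] F) (S : G →ₗ[A] E) (g : G × G) :
    Qmap LG LF (T ∘ₗ S) g
      = Qmap LE LF T (Qmap LG LE S g)
        + (0, ∑ i, ∑ j, (half K A * D.ω i j) • nabOf LE LF T i (nabOf LG LE S j g.1)) := by
  refine Prod.ext (add_zero _).symm ?_
  simp only [Qmap, Prod.snd_add, nabOf_comp LE LF LG T S, LF.nab_add,
    nab_map_eq_nabOf_add LE LF T, smul_add, Finset.sum_add_distrib, map_add, map_smul, map_sum,
    LinearMap.comp_apply]
  abel

/-- (i) `Q(T)` is a left `A₁`-module map; (ii) if `T` intertwines the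
Leibniz operators then `Q(T) = T` and `T` is an `A₁`-bimodule map; (iii) the
composition law `Q(T∘S) = Q(T)∘Q(S) + (λ/2) ω^{ij} ∇_i(T)∘∇_j(S)`. -/
theorem statement_3 (D : DefData K A n)
    {E F G : Type} [AddCommGroup E] [Module A E] [AddCommGroup F] [Module A F]
    [AddCommGroup G] [Module A G]
    (LE : LeibMod D E) (LF : LeibMod D F) (LG : LeibMod D G)
    (T : E →ₗ[A] F) (S : G →ₗ[A] E) :
    (∀ (a : A × A) (e : E × E), Qmap LE LF T (lact LE a e) = lact LF a (Qmap LE LF T e)) ∧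
    ((∀ j e, LF.nab j (T e) = T (LE.nab j e)) →
      (∀ e : E × E, Qmap LE LF T e = (T e.1, T e.2)) ∧
      (∀ (a : A × A) (e : E × E),
        (T (lact LE a e).1, T (lact LE a e).2) = lact LF a (T e.1, T e.2)) ∧
      (∀ (e : E × E) (a : A × A),
        (T (ract LE e a).1, T (ract LE e a).2) = ract LF (T e.1, T e.2) a)) ∧
    (∀ g : G × G,
      Qmap LG LF (T ∘ₗ S) g
        = Qmap LE LF T (Qmap LG LE S g)
          + (0, ∑ i, ∑ j, (half K A * D.ω i j) • nabOf LE LF T i (nabOf LG LE S j g.1))) := by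
  refine ⟨Qmap_lact LE LF T, fun hT => ⟨Qmap_eq_of_intertwines hT, fun a e => ?_,
    map_ract_of_intertwines hT⟩, Qmap_comp LE LF LG T S⟩
  simpa only [Qmap_eq_of_intertwines hT] using Qmap_lact LE LF T a e

end Stmt3
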